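/- For every z>0, F is differentiable at z and F'(z)/F(z) = −(3/32)·Σ_{n=0}^∞ 1/((n+z)(n+z+1/4)(n+z+3/4)(n+z+1)), where the series converges absolutely. -/

import Mathlib

/-!
For `x > 0` the Bohr–Mollerup limit `log Γ(x) = lim (logGammaSeq x n - logGammaSeq 1 n)` is the
series `log Γ(x) = ∑ₘ ((x - 1) log ((m + 2)/(m + 1)) - log ((x + m)/(m + 1)))`. Its summands
vanish at `x = 1` and their derivatives `log ((m + 2)/(m + 1)) - 1/(x + m)` are uniformly
summable on every interval `(ε, R)` with `0 < ε < 1 < 2 ≤ R`, so it may be differentiated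
termwise, giving the digamma series
`ψ(x) = Γ'(x)/Γ(x) = ∑ₘ (log ((m + 2)/(m + 1)) - 1/(x + m))`. Hence
`F'/F = ψ(z + 3/4) - ψ(z + 1/4) - 1/(2z)`, and expanding `1/(2z)` as the telescoping series
`½ ∑ₘ (1/(z + m) - 1/(z + m + 1))`, the three series combine termwise into the partial fraction
`-(3/32)/((n + z)(n + z + 1/4)(n + z + 3/4)(n + z + 1))`.
-/

open Real Set

noncomputable def F (z : ℝ) : ℝ :=
  Real.Gamma (z + 3/4) / (Real.Gamma (z + 1/4) * Real.sqrt z)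

open Filter Topology

lemma inv_add_one_le_log_add_one_sub_log {x : ℝ} (hx : 0 < x) :
    (x + 1)⁻¹ ≤ log (x + 1) - log x := by
  rw [← log_div (by positivity) hx.ne']
  convert one_sub_inv_le_log_of_pos (show 0 < (x + 1) / x by positivity) using 1
  field_simp
  ring

lemma log_add_one_sub_log_le_inv {x : ℝ} (hx : 0 < x) : log (x + 1) - log x ≤ x⁻¹ := by
  rw [← log_div (by positivity) hx.ne']
  convert log_le_sub_one_of_pos (show 0 < (x + 1) / x by positivity) using 1
  field_simp
  ring

lemma summable_inv_add_sub_inv_add {a b : ℝ} (ha : 0 < a) (hab : a ≤ b) :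
    Summable fun m : ℕ => (a + m)⁻¹ - (b + m)⁻¹ := by
  have hb := ha.trans_le hab
  have hp : Summable fun m : ℕ => (b - a) * (1 / |m + a| ^ (2 : ℝ)) :=
    ((Real.summable_one_div_nat_add_rpow a 2).mpr one_lt_two).mul_left _
  refine hp.of_nonneg_of_le (fun m => ?_) (fun m => ?_)
  · have : (b + m)⁻¹ ≤ (a + m)⁻¹ := inv_anti₀ (by positivity) (by linarith)
    linarith
  · rw [abs_of_pos (by positivity), Real.rpow_two, inv_sub_inv (by positivity) (by positivity)]
    rw [div_eq_mul_one_div (b + m - (a + m)), show b + m - (a + m) = b - a by ring]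
    gcongr
    nlinarith [mul_nonneg (by positivity : (0 : ℝ) ≤ a + m) (sub_nonneg.2 hab)]

lemma abs_log_sub_log_sub_inv_le {ε R y : ℝ} (hε : 0 < ε) (hε1 : ε ≤ 1) (hR : 2 ≤ R)
    (hy : y ∈ Ioo ε R) (m : ℕ) :
    |log (m + 2) - log (m + 1) - (y + m)⁻¹| ≤ (ε + m)⁻¹ - (R + m)⁻¹ := by
  have hm : (0 : ℝ) < m + 1 := by positivity
  have hup := log_add_one_sub_log_le_inv hm
  have hlow := inv_add_one_le_log_add_one_sub_log hm
  rw [show (m : ℝ) + 1 + 1 = m + 2 by ring] at hup hlow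
  have hy0 := hε.trans hy.1
  have h1 : (m + 1 : ℝ)⁻¹ ≤ (ε + m)⁻¹ := inv_anti₀ (by positivity) (by linarith)
  have h2 : (R + m)⁻¹ ≤ (m + 2 : ℝ)⁻¹ := inv_anti₀ (by positivity) (by linarith)
  have h3 : (y + m)⁻¹ ≤ (ε + m)⁻¹ := inv_anti₀ (by positivity) (by linarith [hy.1])
  have h4 : (R + m)⁻¹ ≤ (y + m)⁻¹ := inv_anti₀ (by positivity) (by linarith [hy.2])
  rw [abs_sub_le_iff]
  constructor <;> linarith

noncomputable def logGammaTerm (m : ℕ) (x : ℝ) : ℝ :=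
  (x - 1) * (log (m + 2) - log (m + 1)) - (log (x + m) - log (m + 1))

lemma logGammaTerm_one (m : ℕ) : logGammaTerm m 1 = 0 := by
  simp [logGammaTerm, add_comm]

lemma hasDerivAt_logGammaTerm (m : ℕ) {x : ℝ} (hx : 0 < x) :
    HasDerivAt (logGammaTerm m) (log (m + 2) - log (m + 1) - (x + m)⁻¹) x := by
  have hlog := ((hasDerivAt_id' x).add_const (m : ℝ)).log (by positivity)
  exact ((((hasDerivAt_id' x).sub_const 1).mul_const (log (m + 2) - log (m + 1))).sub
    (hlog.sub_const (log (m + 1)))).congr_deriv (by field_simp)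

lemma sum_range_succ_logGammaTerm (x : ℝ) (n : ℕ) :
    ∑ m ∈ Finset.range (n + 1), logGammaTerm m x =
      BohrMollerup.logGammaSeq x n - BohrMollerup.logGammaSeq 1 n
        + (x - 1) * (log (n + 2) - log n) := by
  have htel : ∑ m ∈ Finset.range (n + 1), log ((m : ℝ) + 2) =
      ∑ m ∈ Finset.range (n + 1), log ((m : ℝ) + 1) + log (n + 2) := by
    induction n with
    | zero => simp
    | succ k ih =>
      rw [Finset.sum_range_succ, ih, Finset.sum_range_succ (n := k + 1)]
      push_cast
      ring_nf
  simp only [logGammaTerm, BohrMollerup.logGammaSeq, Finset.sum_sub_distrib, ← Finset.mul_sum,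
    htel, add_comm (1 : ℝ)]
  ring

lemma exists_Ioo_mem_of_pos {x : ℝ} (hx : 0 < x) :
    ∃ ε R : ℝ, 0 < ε ∧ ε < 1 ∧ 2 ≤ R ∧ x ∈ Ioo ε R :=
  ⟨min x 1 / 2, max x 1 + 1, by positivity, by linarith [min_le_right x 1],
    by linarith [le_max_right x 1],
    by linarith [min_le_left x 1, lt_min hx one_pos], by linarith [le_max_left x 1]⟩

section LogGammaSeries

variable {ε R x : ℝ} (hε : 0 < ε) (hε1 : ε < 1) (hR : 2 ≤ R)
include hε hε1 hR

lemma summable_logGammaTerm_of_mem_Ioo (hx : x ∈ Ioo ε R) : Summable (logGammaTerm · x) :=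
  summable_of_summable_hasDerivAt_of_isPreconnected
    (summable_inv_add_sub_inv_add hε (by linarith)) isOpen_Ioo isPreconnected_Ioo
    (fun m _ hy => hasDerivAt_logGammaTerm m (hε.trans hy.1))
    (fun m _ hy => abs_log_sub_log_sub_inv_le hε hε1.le hR hy m)
    (⟨by linarith, by linarith⟩ : (1 : ℝ) ∈ Ioo ε R) (by simp [logGammaTerm_one]) hx

lemma hasDerivAt_tsum_logGammaTerm_of_mem_Ioo (hx : x ∈ Ioo ε R) :
    HasDerivAt (fun y => ∑' m, logGammaTerm m y)
      (∑' m : ℕ, (log (m + 2) - log (m + 1) - (x + m)⁻¹)) x :=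
  hasDerivAt_tsum_of_isPreconnected
    (summable_inv_add_sub_inv_add hε (by linarith)) isOpen_Ioo isPreconnected_Ioo
    (fun m _ hy => hasDerivAt_logGammaTerm m (hε.trans hy.1))
    (fun m _ hy => abs_log_sub_log_sub_inv_le hε hε1.le hR hy m)
    (⟨by linarith, by linarith⟩ : (1 : ℝ) ∈ Ioo ε R) (by simp [logGammaTerm_one]) hx

end LogGammaSeries

lemma hasSum_logGammaTerm {x : ℝ} (hx : 0 < x) : HasSum (logGammaTerm · x) (log (Gamma x)) := by
  obtain ⟨ε, R, hε, hε1, hR, hxI⟩ := exists_Ioo_mem_of_pos hx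
  rw [(summable_logGammaTerm_of_mem_Ioo hε hε1 hR hxI).hasSum_iff_tendsto_nat,
    ← tendsto_add_atTop_iff_nat 1]
  have hlim :=
    ((BohrMollerup.tendsto_log_gamma hx).sub (BohrMollerup.tendsto_log_gamma one_pos)).add
    (((tendsto_log_comp_add_sub_log 2).comp tendsto_natCast_atTop_atTop).const_mul (x - 1))
  rw [Gamma_one, log_one, sub_zero, mul_zero, add_zero] at hlim
  exact hlim.congr fun n => (sum_range_succ_logGammaTerm x n).symm

lemma differentiableAt_Gamma_of_pos {x : ℝ} (hx : 0 < x) : DifferentiableAt ℝ Gamma x :=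
  differentiableOn_Gamma_Ioi.differentiableAt (Ioi_mem_nhds hx)

lemma hasSum_logDeriv_Gamma {x : ℝ} (hx : 0 < x) :
    HasSum (fun m : ℕ => log (m + 2) - log (m + 1) - (x + m)⁻¹) (logDeriv Gamma x) := by
  obtain ⟨ε, R, hε, hε1, hR, hxI⟩ := exists_Ioo_mem_of_pos hx
  have heq : (fun y => ∑' m, logGammaTerm m y) =ᶠ[𝓝 x] log ∘ Gamma := by
    filter_upwards [Ioi_mem_nhds hx] with y hy using (hasSum_logGammaTerm hy).tsum_eq
  have hderiv := (hasDerivAt_tsum_logGammaTerm_of_mem_Ioo hε hε1 hR hxI).congr_of_eventuallyEq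
    heq.symm
  rw [← deriv_log_comp_eq_logDeriv (differentiableAt_Gamma_of_pos hx) (Gamma_pos_of_pos hx).ne',
    hderiv.deriv]
  exact (Summable.of_norm_bounded (summable_inv_add_sub_inv_add hε (by linarith))
    fun m => abs_log_sub_log_sub_inv_le hε hε1.le hR hxI m).hasSum

lemma hasSum_logDeriv_Gamma_sub {a b : ℝ} (ha : 0 < a) (hb : 0 < b) :
    HasSum (fun m : ℕ => (b + m)⁻¹ - (a + m)⁻¹) (logDeriv Gamma a - logDeriv Gamma b) :=
  ((hasSum_logDeriv_Gamma ha).sub (hasSum_logDeriv_Gamma hb)).congr_fun fun m => by ring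

lemma hasSum_inv_add_sub_inv_add_one {x : ℝ} (hx : 0 < x) :
    HasSum (fun m : ℕ => (x + m)⁻¹ - (x + m + 1)⁻¹) x⁻¹ := by
  have hnonneg (m : ℕ) : 0 ≤ (x + m)⁻¹ - (x + m + 1)⁻¹ :=
    sub_nonneg.2 (inv_anti₀ (by positivity) (by linarith))
  have hpartial (n : ℕ) :
      ∑ m ∈ Finset.range n, ((x + m)⁻¹ - (x + m + 1)⁻¹) = x⁻¹ - (x + n)⁻¹ := by
    induction n with
    | zero => simp
    | succ k ih =>
      rw [Finset.sum_range_succ, ih]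
      push_cast
      ring
  rw [hasSum_iff_tendsto_nat_of_nonneg hnonneg]
  simp_rw [hpartial]
  simpa using tendsto_const_nhds.sub
    (tendsto_atTop_add_const_left _ x tendsto_natCast_atTop_atTop).inv_tendsto_atTop

lemma logDeriv_comp_add_const (f : ℝ → ℝ) (a x : ℝ) :
    logDeriv (fun y => f (y + a)) x = logDeriv f (x + a) := by
  simp only [logDeriv_apply, deriv_comp_add_const]

lemma logDeriv_sqrt {x : ℝ} (hx : 0 < x) : logDeriv (√·) x = (2 * x)⁻¹ := by
  rw [logDeriv_apply, (hasDerivAt_sqrt hx.ne').deriv]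
  field_simp
  rw [sq_sqrt hx.le]

lemma differentiableAt_F {z : ℝ} (hz : 0 < z) : DifferentiableAt ℝ F z :=
  (differentiableAt_comp_add_const.mpr (differentiableAt_Gamma_of_pos (by linarith))).div
    ((differentiableAt_comp_add_const.mpr (differentiableAt_Gamma_of_pos (by linarith))).mul
      (differentiableAt_id.sqrt hz.ne'))
    (mul_pos (Gamma_pos_of_pos (by linarith)) (sqrt_pos.2 hz)).ne'

lemma logDeriv_F {z : ℝ} (hz : 0 < z) :
    logDeriv F z = logDeriv Gamma (z + 3/4) - logDeriv Gamma (z + 1/4) - (2 * z)⁻¹ := by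
  have hΓ₁ : DifferentiableAt ℝ (fun y => Gamma (y + 1/4)) z :=
    differentiableAt_comp_add_const.mpr (differentiableAt_Gamma_of_pos (by linarith))
  have hΓ₃ : DifferentiableAt ℝ (fun y => Gamma (y + 3/4)) z :=
    differentiableAt_comp_add_const.mpr (differentiableAt_Gamma_of_pos (by linarith))
  have hsqrt : DifferentiableAt ℝ (√·) z := (hasDerivAt_sqrt hz.ne').differentiableAt
  have hpos₁ := Gamma_pos_of_pos (show 0 < z + 1/4 by linarith)
  have hpos₃ := Gamma_pos_of_pos (show 0 < z + 3/4 by linarith)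
  have hsqrt_pos := sqrt_pos.2 hz
  change logDeriv (fun y => Gamma (y + 3/4) / (Gamma (y + 1/4) * √y)) z = _
  rw [logDeriv_div (f := fun y => Gamma (y + 3/4)) (g := fun y => Gamma (y + 1/4) * √y) z
      hpos₃.ne' (mul_pos hpos₁ hsqrt_pos).ne' hΓ₃ (hΓ₁.mul hsqrt),
    logDeriv_mul (f := fun y => Gamma (y + 1/4)) z hpos₁.ne' hsqrt_pos.ne' hΓ₁ hsqrt,
    logDeriv_comp_add_const, logDeriv_comp_add_const, logDeriv_sqrt hz]
  ring

theorem stmt12 :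
    ∀ z : ℝ, 0 < z →
      DifferentiableAt ℝ F z ∧
      Summable (fun n : ℕ =>
        |1 / ((n+z) * (n+z+1/4) * (n+z+3/4) * (n+z+1))|) ∧
      deriv F z / F z
        = -(3/32) * ∑' n : ℕ, 1 / ((n+z) * (n+z+1/4) * (n+z+3/4) * (n+z+1)) := by
  intro z hz
  have hsum : HasSum (fun n : ℕ => -(3/32) * (1 / ((n+z) * (n+z+1/4) * (n+z+3/4) * (n+z+1))))
      (deriv F z / F z) := by
    rw [← logDeriv_apply, logDeriv_F hz, mul_inv]
    have hΓ := hasSum_logDeriv_Gamma_sub (a := z + 3/4) (b := z + 1/4) (by linarith) (by linarith)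
    refine (hΓ.sub ((hasSum_inv_add_sub_inv_add_one hz).mul_left 2⁻¹)).congr_fun fun n => ?_
    have hn : (0 : ℝ) < n + z := by positivity
    have h₁ : z + 1/4 + n ≠ 0 := by linarith
    have h₃ : z + 3/4 + n ≠ 0 := by linarith
    have h₄ : z + n + 1 ≠ 0 := by linarith
    field_simp
    ring
  have hsummable := (summable_mul_left_iff (by norm_num : -(3/32 : ℝ) ≠ 0)).mp hsum.summable
  refine ⟨differentiableAt_F hz, hsummable.abs, ?_⟩
  rw [← hsum.tsum_eq, tsum_mul_left]
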